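/- (Decoupling of the perturbed dynamics on the exceptional hypersurface, the key step in the proof of the b-KAM theorem.) Let n ≥ 2, c ≠ 0, k, k', ε ∈ ℝ, let h : ℝⁿ → ℝ be C¹, and let f(φ,y) = f₁(φ̃,y) + y₁·f₂(φ,y) + f₃(φ₁,y₁) with f₁ : ℝ^{n-1} × ℝⁿ → ℝ, f₂ : ℝⁿ × ℝⁿ → ℝ, f₃ : ℝ × ℝ → ℝ all C¹, where φ̃ = (φ₂,…,φₙ). Define h̄(ỹ) := h(0,ỹ) and f̄₁(φ̃,ỹ) := f₁(φ̃,(0,ỹ)) for ỹ ∈ ℝ^{n-1}. Then a C¹ curve t ↦ (φ₁(t), φ̃(t), y₁(t), ỹ(t)) with y₁(t) = 0 for all t is a solution of the perturbed b-Hamiltonian system if and only if: φ₁'(t) = (k+εk')/c for all t, and (φ̃, ỹ) is a solution of the standard Hamiltonian system of h̄ + εf̄₁ on ℝ^{n-1} × ℝ^{n-1}, namely φ̃' = ∂_{ỹ}(h̄ + εf̄₁)(φ̃,ỹ) and ỹ' = −∂_{φ̃}(h̄ + εf̄₁)(φ̃,ỹ). -/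

import Mathlib

/- We model `ℝⁿ × ℝⁿ` with `n = m + 1 ≥ 2` as `Pt m`, splitting the coordinates as
`(φ, y) = ((φ₁, φ̃), (y₁, ỹ))` with `φ̃ = (φ₂, …, φₙ)`, `ỹ = (y₂, …, yₙ)`. -/
abbrev Pt (m : ℕ) := (ℝ × (Fin m → ℝ)) × (ℝ × (Fin m → ℝ))

/-- `∂F/∂φ₁`. -/
noncomputable def pdPhi1 {m : ℕ} (F : Pt m → ℝ) (p : Pt m) : ℝ :=
  fderiv ℝ F p ((1, 0), (0, 0))

/-- `∂F/∂φᵢ₊₁` for `i : Fin m`. -/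
noncomputable def pdPhi {m : ℕ} (F : Pt m → ℝ) (p : Pt m) (i : Fin m) : ℝ :=
  fderiv ℝ F p ((0, Pi.single i 1), (0, 0))

/-- `∂F/∂y₁`. -/
noncomputable def pdY1 {m : ℕ} (F : Pt m → ℝ) (p : Pt m) : ℝ :=
  fderiv ℝ F p ((0, 0), (1, 0))

/-- `∂F/∂yᵢ₊₁` for `i : Fin m`. -/
noncomputable def pdY {m : ℕ} (F : Pt m → ℝ) (p : Pt m) (i : Fin m) : ℝ :=
  fderiv ℝ F p ((0, 0), (0, Pi.single i 1))

/-! On the hypersurface `y₁ = 0` the term `y₁ f₂` contributes only `f₂ dy₁` to `df`, and `f₃` only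
sees `(φ₁, y₁)`, so the `φ̃`- and `ỹ`-partials of `f` there are those of `f₁`, i.e. of `f̄₁`.
Hence the `φ̃, ỹ` equations become Hamilton's equations for `h̄ + ε f̄₁`, while the `y₁/c` terms
vanish and the `y₁` equation holds trivially. -/

section

variable {E F : Type*} [NormedAddCommGroup E] [NormedSpace ℝ E]
  [NormedAddCommGroup F] [NormedSpace ℝ F]

theorem fderiv_perturbation_apply_of_y₁_eq_zero
    {f₁ : E × (ℝ × F) → ℝ} {f₂ : (ℝ × E) × (ℝ × F) → ℝ} {f₃ : ℝ × ℝ → ℝ}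
    {p : (ℝ × E) × (ℝ × F)}
    (hf₁ : DifferentiableAt ℝ f₁ (p.1.2, p.2)) (hf₂ : DifferentiableAt ℝ f₂ p)
    (hf₃ : DifferentiableAt ℝ f₃ (p.1.1, p.2.1)) (hp : p.2.1 = 0)
    {v : (ℝ × E) × (ℝ × F)} (hv₁ : v.1.1 = 0) (hv₂ : v.2.1 = 0) :
    fderiv ℝ (fun p => f₁ (p.1.2, p.2) + p.2.1 * f₂ p + f₃ (p.1.1, p.2.1)) p v
      = fderiv ℝ f₁ (p.1.2, p.2) (v.1.2, v.2) := by
  have d₁ := hf₁.hasFDerivAt.comp (f := fun p : (ℝ × E) × (ℝ × F) => (p.1.2, p.2)) p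
    ((hasFDerivAt_snd.comp p hasFDerivAt_fst).prodMk hasFDerivAt_snd)
  have d₂ := (hasFDerivAt_fst.comp p hasFDerivAt_snd).mul hf₂.hasFDerivAt
  have d₃ := hf₃.hasFDerivAt.comp (f := fun p : (ℝ × E) × (ℝ × F) => (p.1.1, p.2.1)) p
    ((hasFDerivAt_fst.comp p hasFDerivAt_fst).prodMk (hasFDerivAt_fst.comp p hasFDerivAt_snd))
  have d : HasFDerivAt (fun p => f₁ (p.1.2, p.2) + p.2.1 * f₂ p + f₃ (p.1.1, p.2.1)) _ p :=
    (d₁.add d₂).add d₃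
  rw [d.fderiv]
  simp [hp, hv₁, hv₂, Prod.mk_zero_zero]

theorem fderiv_reducedHamiltonian_apply {h : ℝ × F → ℝ} {f₁ : E × (ℝ × F) → ℝ} {q : E × F}
    (hh : DifferentiableAt ℝ h (0, q.2)) (hf₁ : DifferentiableAt ℝ f₁ (q.1, (0, q.2)))
    (ε : ℝ) (v : E × F) :
    fderiv ℝ (fun q : E × F => h (0, q.2) + ε * f₁ (q.1, (0, q.2))) q v
      = fderiv ℝ h (0, q.2) (0, v.2) + ε * fderiv ℝ f₁ (q.1, (0, q.2)) (v.1, (0, v.2)) := by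
  have d₁ := hh.hasFDerivAt.comp (f := fun q : E × F => ((0 : ℝ), q.2)) q
    ((hasFDerivAt_const (0 : ℝ) q).prodMk hasFDerivAt_snd)
  have d₂ := hf₁.hasFDerivAt.comp (f := fun q : E × F => (q.1, ((0 : ℝ), q.2))) q
    (hasFDerivAt_fst.prodMk ((hasFDerivAt_const (0 : ℝ) q).prodMk hasFDerivAt_snd))
  have d : HasFDerivAt (fun q : E × F => h (0, q.2) + ε * f₁ (q.1, (0, q.2))) _ q :=
    d₁.add (d₂.const_mul ε)
  rw [d.fderiv]
  simp

end

theorem stmt2_general (m : ℕ) (c : ℝ) (k k' ε : ℝ)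
    (h : ℝ × (Fin m → ℝ) → ℝ) (hh : ContDiff ℝ 1 h)
    (f₁ : (Fin m → ℝ) × (ℝ × (Fin m → ℝ)) → ℝ) (hf₁ : ContDiff ℝ 1 f₁)
    (f₂ : Pt m → ℝ) (hf₂ : ContDiff ℝ 1 f₂)
    (f₃ : ℝ × ℝ → ℝ) (hf₃ : ContDiff ℝ 1 f₃)
    (f : Pt m → ℝ)
    (hf : ∀ p : Pt m, f p = f₁ (p.1.2, p.2) + p.2.1 * f₂ p + f₃ (p.1.1, p.2.1))
    (Hred : (Fin m → ℝ) × (Fin m → ℝ) → ℝ)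
    (hHred : ∀ q : (Fin m → ℝ) × (Fin m → ℝ),
      Hred q = h (0, q.2) + ε * f₁ (q.1, (0, q.2)))
    (φ1 : ℝ → ℝ) (φt : ℝ → Fin m → ℝ) (y1 : ℝ → ℝ) (yt : ℝ → Fin m → ℝ)
    (hy1 : ∀ t : ℝ, y1 t = 0) :
    (∀ t : ℝ,
      HasDerivAt φ1
        ((k + ε * k') / c + (y1 t / c) *
          (fderiv ℝ h (y1 t, yt t) (1, 0) +
            ε * pdY1 f ((φ1 t, φt t), (y1 t, yt t)))) t ∧
      (∀ i : Fin m, HasDerivAt (fun s => φt s i)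
        (fderiv ℝ h (y1 t, yt t) (0, Pi.single i 1) +
          ε * pdY f ((φ1 t, φt t), (y1 t, yt t)) i) t) ∧
      HasDerivAt y1
        (-(ε * (y1 t / c) * pdPhi1 f ((φ1 t, φt t), (y1 t, yt t)))) t ∧
      (∀ i : Fin m, HasDerivAt (fun s => yt s i)
        (-(ε * pdPhi f ((φ1 t, φt t), (y1 t, yt t)) i)) t))
    ↔
    ((∀ t : ℝ, HasDerivAt φ1 ((k + ε * k') / c) t) ∧
      (∀ t : ℝ, ∀ i : Fin m, HasDerivAt (fun s => φt s i)
        (fderiv ℝ Hred (φt t, yt t) (0, Pi.single i 1)) t) ∧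
      (∀ t : ℝ, ∀ i : Fin m, HasDerivAt (fun s => yt s i)
        (-fderiv ℝ Hred (φt t, yt t) (Pi.single i 1, 0)) t)) := by
  have hf_deriv : ∀ p v : Pt m, p.2.1 = 0 → v.1.1 = 0 → v.2.1 = 0 →
      fderiv ℝ f p v = fderiv ℝ f₁ (p.1.2, p.2) (v.1.2, v.2) := by
    intro p v hp hv₁ hv₂
    rw [funext hf]
    exact fderiv_perturbation_apply_of_y₁_eq_zero (hf₁.differentiable one_ne_zero _)
      (hf₂.differentiable one_ne_zero _) (hf₃.differentiable one_ne_zero _) hp hv₁ hv₂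
  have hHred_deriv : ∀ q v : (Fin m → ℝ) × (Fin m → ℝ), fderiv ℝ Hred q v =
      fderiv ℝ h (0, q.2) (0, v.2) + ε * fderiv ℝ f₁ (q.1, (0, q.2)) (v.1, (0, v.2)) := by
    intro q v
    rw [funext hHred]
    exact fderiv_reducedHamiltonian_apply (hh.differentiable one_ne_zero _)
      (hf₁.differentiable one_ne_zero _) ε v
  obtain rfl : y1 = fun _ => 0 := funext hy1
  simp only [pdY, pdPhi, hf_deriv, hHred_deriv, zero_div, zero_mul, add_zero, mul_zero, neg_zero,
    hasDerivAt_const, true_and, forall_and, Prod.mk_zero_zero, Prod.fst_zero, Prod.snd_zero,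
    map_zero, zero_add]

/-- (Decoupling of the perturbed dynamics on the exceptional hypersurface, the key step
in the proof of the b-KAM theorem.)  Let `f(φ,y) = f₁(φ̃,y) + y₁·f₂(φ,y) + f₃(φ₁,y₁)`
with `h, f₁, f₂, f₃` all `C¹`, and let `Hred(φ̃,ỹ) = h̄(ỹ) + ε f̄₁(φ̃,ỹ)` where
`h̄(ỹ) = h(0,ỹ)` and `f̄₁(φ̃,ỹ) = f₁(φ̃,(0,ỹ))`.  A `C¹` curve
`t ↦ (φ₁(t), φ̃(t), y₁(t), ỹ(t))` with `y₁ ≡ 0` is a solution of the perturbed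
b-Hamiltonian system if and only if `φ₁' = (k+εk')/c` and `(φ̃, ỹ)` solves the standard
Hamiltonian system of `h̄ + εf̄₁` on `ℝ^{n-1} × ℝ^{n-1}`. -/
theorem stmt2 (m : ℕ) (hm : 1 ≤ m) (c : ℝ) (hc : c ≠ 0) (k k' ε : ℝ)
    (h : ℝ × (Fin m → ℝ) → ℝ) (hh : ContDiff ℝ 1 h)
    (f₁ : (Fin m → ℝ) × (ℝ × (Fin m → ℝ)) → ℝ) (hf₁ : ContDiff ℝ 1 f₁)
    (f₂ : Pt m → ℝ) (hf₂ : ContDiff ℝ 1 f₂)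
    (f₃ : ℝ × ℝ → ℝ) (hf₃ : ContDiff ℝ 1 f₃)
    (f : Pt m → ℝ)
    (hf : ∀ p : Pt m, f p = f₁ (p.1.2, p.2) + p.2.1 * f₂ p + f₃ (p.1.1, p.2.1))
    (Hred : (Fin m → ℝ) × (Fin m → ℝ) → ℝ)
    (hHred : ∀ q : (Fin m → ℝ) × (Fin m → ℝ),
      Hred q = h (0, q.2) + ε * f₁ (q.1, (0, q.2)))
    (φ1 : ℝ → ℝ) (φt : ℝ → Fin m → ℝ) (y1 : ℝ → ℝ) (yt : ℝ → Fin m → ℝ)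
    (hcurve : ContDiff ℝ 1 (fun t : ℝ => (((φ1 t, φt t), (y1 t, yt t)) : Pt m)))
    (hy1 : ∀ t : ℝ, y1 t = 0) :
    (∀ t : ℝ,
      HasDerivAt φ1
        ((k + ε * k') / c + (y1 t / c) *
          (fderiv ℝ h (y1 t, yt t) (1, 0) +
            ε * pdY1 f ((φ1 t, φt t), (y1 t, yt t)))) t ∧
      (∀ i : Fin m, HasDerivAt (fun s => φt s i)
        (fderiv ℝ h (y1 t, yt t) (0, Pi.single i 1) +
          ε * pdY f ((φ1 t, φt t), (y1 t, yt t)) i) t) ∧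
      HasDerivAt y1
        (-(ε * (y1 t / c) * pdPhi1 f ((φ1 t, φt t), (y1 t, yt t)))) t ∧
      (∀ i : Fin m, HasDerivAt (fun s => yt s i)
        (-(ε * pdPhi f ((φ1 t, φt t), (y1 t, yt t)) i)) t))
    ↔
    ((∀ t : ℝ, HasDerivAt φ1 ((k + ε * k') / c) t) ∧
      (∀ t : ℝ, ∀ i : Fin m, HasDerivAt (fun s => φt s i)
        (fderiv ℝ Hred (φt t, yt t) (0, Pi.single i 1)) t) ∧
      (∀ t : ℝ, ∀ i : Fin m, HasDerivAt (fun s => yt s i)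
        (-fderiv ℝ Hred (φt t, yt t) (Pi.single i 1, 0)) t)) :=
  stmt2_general m c k k' ε h hh f₁ hf₁ f₂ hf₂ f₃ hf₃ f hf Hred hHred φ1 φt y1 yt hy1
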